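/- Let f : T → ℕ be injective, let succ : T → T be a 'predecessor-respecting' relation via pred : T → Option T, and suppose Seen ⊆ T satisfies: for all i ≤ c, there exists t ∈ Seen with f t = i. If m is an element of S := {t ∈ Seen | pred t = some p} minimizing f over S, and f m ≤ c, then for every t ∈ T with pred t = some p, f m ≤ f t. -/
import Mathlib

theorem min_over_seen_is_global_min {T : Type*} (f : T → ℕ)
    (hf : Function.Injective f) (pred : T → Option T)
    (Seen : Set T) (c : ℕ) (p : T)
    (hcomplete : ∀ i ≤ c, ∃ t ∈ Seen, f t = i)
    (m : T) (hmS : m ∈ Seen ∧ pred m = some p)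
    (hmin : ∀ t, t ∈ Seen ∧ pred t = some p → f m ≤ f t)
    (hmc : f m ≤ c) :
    ∀ t : T, pred t = some p → f m ≤ f t := by
  intro t ht
  by_contra h
  push_neg at h
  obtain ⟨s, hs, hfs⟩ := hcomplete (f t) (le_trans h.le hmc)
  have : s = t := hf hfs
  subst this
  exact absurd (hmin s ⟨hs, ht⟩) (not_le.mpr h)
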